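/- Let W1 and W2 be B-DMCs with finite output alphabets Y1 and Y2 satisfying W_i(y|0)+W_i(y|1) > 0 for every output y, and let ρ ≥ 0. Assume |Δ_{W1}(y1)·Δ_{W2}(y2)| < 1 for all y1, y2. Then exp(−E0(ρ, W⁺)) = Σ_{y1∈Y1} Σ_{y2∈Y2} q_{W1}(y1) q_{W2}(y2) · h(ρ, |Δ_{W1}(y1)|, |Δ_{W2}(y2)|), where W⁺ is the plus polar transform of W1 and W2. -/

import Mathlib

open Real

/-- Gallager's `g` function: `g ρ z = ((1/2)(1+z)^{1/(1+ρ)} + (1/2)(1-z)^{1/(1+ρ)})^{1+ρ}`. -/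
noncomputable def g (ρ z : ℝ) : ℝ :=
  ((1/2) * (1 + z) ^ (1/(1+ρ)) + (1/2) * (1 - z) ^ (1/(1+ρ))) ^ (1+ρ)

/-- Gallager's `E0` of a binary-input channel `W` (input `false` is 0, `true` is 1)
under the uniform input distribution. -/
noncomputable def E0 {Y : Type*} [Fintype Y] (ρ : ℝ) (W : Bool → Y → ℝ) : ℝ :=
  - Real.log (∑ y, ((1/2) * (W false y) ^ (1/(1+ρ)) + (1/2) * (W true y) ^ (1/(1+ρ))) ^ (1+ρ))

/-- `q_W(y) = (W(y|0)+W(y|1))/2`. -/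
noncomputable def qW {Y : Type*} (W : Bool → Y → ℝ) (y : Y) : ℝ :=
  (W false y + W true y) / 2

/-- `Δ_W(y) = (W(y|0) - W(y|1))/(W(y|0)+W(y|1))`. -/
noncomputable def ΔW {Y : Type*} (W : Bool → Y → ℝ) (y : Y) : ℝ :=
  (W false y - W true y) / (W false y + W true y)

/-- The minus polar transform of two channels. -/
noncomputable def Wminus {Y1 Y2 : Type*} (W1 : Bool → Y1 → ℝ) (W2 : Bool → Y2 → ℝ) :
    Bool → Y1 × Y2 → ℝ :=
  fun u1 y => ∑ u2 : Bool, (1/2) * W1 (xor u1 u2) y.1 * W2 u2 y.2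

/-- The plus polar transform of two channels; output is `(y1, y2, u1)`. -/
noncomputable def Wplus {Y1 Y2 : Type*} (W1 : Bool → Y1 → ℝ) (W2 : Bool → Y2 → ℝ) :
    Bool → Y1 × Y2 × Bool → ℝ :=
  fun u2 y => (1/2) * W1 (xor y.2.2 u2) y.1 * W2 u2 y.2.1

/-- The function `h(ρ, z1, z2)` from the `W⁺` representation. -/
noncomputable def hfun (ρ z1 z2 : ℝ) : ℝ :=
  (1/2) * (1 + z1*z2) * g ρ ((z1 + z2)/(1 + z1*z2))
    + (1/2) * (1 - z1*z2) * g ρ ((z1 - z2)/(1 - z1*z2))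

/-!
Write `W_i(·|0) = q_i (1 + Δ_i)` and `W_i(·|1) = q_i (1 - Δ_i)`. For a fixed `(y₁, y₂)` the two
outputs `u₁ = 0, 1` of `W⁺` have likelihood pairs `½ q₁ q₂ ((1 + Δ₁)(1 + Δ₂), (1 - Δ₁)(1 - Δ₂))` and
`½ q₁ q₂ ((1 - Δ₁)(1 + Δ₂), (1 + Δ₁)(1 - Δ₂))`, i.e. of the form `(c + d, c - d)` with
`c = 1 ± Δ₁Δ₂`. Gallager's per-output term is positively homogeneous of degree one, so such a pair
contributes `c · g(ρ, d / c)`, which gives `h(ρ, Δ₁, Δ₂)`; finally `h` is even in each argument.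
-/

noncomputable def gallagerTerm (ρ a b : ℝ) : ℝ :=
  ((1/2) * a ^ (1/(1+ρ)) + (1/2) * b ^ (1/(1+ρ))) ^ (1+ρ)

lemma gallagerTerm_comm (ρ a b : ℝ) : gallagerTerm ρ a b = gallagerTerm ρ b a := by
  rw [gallagerTerm, gallagerTerm, add_comm]

lemma g_eq_gallagerTerm (ρ z : ℝ) : g ρ z = gallagerTerm ρ (1 + z) (1 - z) := rfl

section GallagerTerm

variable {ρ a b : ℝ}

lemma gallagerTerm_nonneg (ha : 0 ≤ a) (hb : 0 ≤ b) : 0 ≤ gallagerTerm ρ a b := by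
  unfold gallagerTerm; positivity

lemma gallagerTerm_pos_of_pos_left (ha : 0 < a) (hb : 0 ≤ b) : 0 < gallagerTerm ρ a b := by
  have := rpow_pos_of_pos ha (1/(1+ρ))
  have := rpow_nonneg hb (1/(1+ρ))
  exact rpow_pos_of_pos (by linarith) _

lemma gallagerTerm_mul (hρ : 1 + ρ ≠ 0) {K : ℝ} (hK : 0 ≤ K) (ha : 0 ≤ a) (hb : 0 ≤ b) :
    gallagerTerm ρ (K * a) (K * b) = K * gallagerTerm ρ a b := by
  set s := (1/2) * a ^ (1/(1+ρ)) + (1/2) * b ^ (1/(1+ρ)) with hs_def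
  have hs : 0 ≤ s := by positivity
  calc gallagerTerm ρ (K * a) (K * b) = (K ^ (1/(1+ρ)) * s) ^ (1+ρ) := by
        rw [gallagerTerm, mul_rpow hK ha, mul_rpow hK hb, hs_def]; ring_nf
    _ = (K ^ (1/(1+ρ))) ^ (1+ρ) * s ^ (1+ρ) := mul_rpow (rpow_nonneg hK _) hs
    _ = K * gallagerTerm ρ a b := by
        rw [← rpow_mul hK, one_div_mul_cancel hρ, rpow_one, gallagerTerm]

lemma gallagerTerm_add_sub (hρ : 1 + ρ ≠ 0) {c d : ℝ} (hc : 0 < c) (hd : |d| ≤ c) :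
    gallagerTerm ρ (c + d) (c - d) = c * g ρ (d / c) := by
  obtain ⟨hd₁, hd₂⟩ := abs_le.mp hd
  have e₁ : c + d = c * ((c + d) / c) := by field_simp
  have e₂ : c - d = c * ((c - d) / c) := by field_simp
  rw [e₁, e₂, gallagerTerm_mul hρ hc.le (div_nonneg (by linarith) hc.le)
    (div_nonneg (by linarith) hc.le), g_eq_gallagerTerm]
  congr 2 <;> field_simp

end GallagerTerm

lemma g_neg (ρ z : ℝ) : g ρ (-z) = g ρ z := by
  rw [g_eq_gallagerTerm, g_eq_gallagerTerm, gallagerTerm_comm, ← sub_eq_add_neg, sub_neg_eq_add]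

lemma hfun_neg_left (ρ z₁ z₂ : ℝ) : hfun ρ (-z₁) z₂ = hfun ρ z₁ z₂ := by
  have h₁ : (-z₁ + z₂) / (1 + -z₁ * z₂) = -((z₁ - z₂) / (1 - z₁ * z₂)) := by ring
  have h₂ : (-z₁ - z₂) / (1 - -z₁ * z₂) = -((z₁ + z₂) / (1 + z₁ * z₂)) := by ring
  rw [hfun, hfun, h₁, h₂, g_neg, g_neg]
  ring

lemma hfun_neg_right (ρ z₁ z₂ : ℝ) : hfun ρ z₁ (-z₂) = hfun ρ z₁ z₂ := by
  have h₁ : (z₁ + -z₂) / (1 + z₁ * -z₂) = -((z₂ - z₁) / (1 - z₁ * z₂)) := by ring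
  have h₂ : (z₁ - -z₂) / (1 - z₁ * -z₂) = (z₁ + z₂) / (1 + z₁ * z₂) := by ring
  have h₃ : (z₂ - z₁) / (1 - z₁ * z₂) = -((z₁ - z₂) / (1 - z₁ * z₂)) := by ring
  rw [hfun, hfun, h₁, h₂, g_neg, h₃, g_neg]
  ring

lemma hfun_abs_abs (ρ z₁ z₂ : ℝ) : hfun ρ |z₁| |z₂| = hfun ρ z₁ z₂ := by
  rcases abs_choice z₁ with h₁ | h₁ <;> rcases abs_choice z₂ with h₂ | h₂ <;>
    simp only [h₁, h₂, hfun_neg_left, hfun_neg_right]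

lemma abs_add_le_one_add_mul {a b : ℝ} (ha : |a| ≤ 1) (hb : |b| ≤ 1) : |a + b| ≤ 1 + a * b := by
  obtain ⟨ha₁, ha₂⟩ := abs_le.mp ha
  obtain ⟨hb₁, hb₂⟩ := abs_le.mp hb
  refine abs_le.mpr ⟨?_, ?_⟩
  · nlinarith [mul_nonneg (by linarith : 0 ≤ 1 + a) (by linarith : 0 ≤ 1 + b)]
  · nlinarith [mul_nonneg (by linarith : 0 ≤ 1 - a) (by linarith : 0 ≤ 1 - b)]

lemma abs_sub_le_one_sub_mul {a b : ℝ} (ha : |a| ≤ 1) (hb : |b| ≤ 1) : |a - b| ≤ 1 - a * b := by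
  simpa [sub_eq_add_neg] using abs_add_le_one_add_mul ha (by rwa [abs_neg] : |-b| ≤ 1)

lemma gallagerTerm_plus_pair {ρ : ℝ} (hρ : 1 + ρ ≠ 0) {q₁ q₂ Δ₁ Δ₂ : ℝ}
    (hq₁ : 0 ≤ q₁) (hq₂ : 0 ≤ q₂) (hΔ₁ : |Δ₁| ≤ 1) (hΔ₂ : |Δ₂| ≤ 1) (hΔ : |Δ₁ * Δ₂| < 1) :
    gallagerTerm ρ ((1/2) * (q₁ * (1 + Δ₁)) * (q₂ * (1 + Δ₂)))
        ((1/2) * (q₁ * (1 - Δ₁)) * (q₂ * (1 - Δ₂)))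
      + gallagerTerm ρ ((1/2) * (q₁ * (1 - Δ₁)) * (q₂ * (1 + Δ₂)))
        ((1/2) * (q₁ * (1 + Δ₁)) * (q₂ * (1 - Δ₂)))
      = q₁ * q₂ * hfun ρ Δ₁ Δ₂ := by
  set K := (1/2) * q₁ * q₂
  have hK : 0 ≤ K := by positivity
  obtain ⟨hΔ_lo, hΔ_hi⟩ := abs_lt.mp hΔ
  have hsum := abs_add_le_one_add_mul hΔ₁ hΔ₂
  have hdiff := abs_sub_le_one_sub_mul hΔ₁ hΔ₂
  obtain ⟨hsum₁, hsum₂⟩ := abs_le.mp hsum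
  obtain ⟨hdiff₁, hdiff₂⟩ := abs_le.mp hdiff
  have e₁ : (1/2) * (q₁ * (1 + Δ₁)) * (q₂ * (1 + Δ₂)) = K * ((1 + Δ₁ * Δ₂) + (Δ₁ + Δ₂)) := by ring
  have e₂ : (1/2) * (q₁ * (1 - Δ₁)) * (q₂ * (1 - Δ₂)) = K * ((1 + Δ₁ * Δ₂) - (Δ₁ + Δ₂)) := by ring
  have e₃ : (1/2) * (q₁ * (1 - Δ₁)) * (q₂ * (1 + Δ₂)) = K * ((1 - Δ₁ * Δ₂) - (Δ₁ - Δ₂)) := by ring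
  have e₄ : (1/2) * (q₁ * (1 + Δ₁)) * (q₂ * (1 - Δ₂)) = K * ((1 - Δ₁ * Δ₂) + (Δ₁ - Δ₂)) := by ring
  rw [e₁, e₂, e₃, e₄, gallagerTerm_mul hρ hK (by linarith) (by linarith),
    gallagerTerm_mul hρ hK (by linarith) (by linarith), gallagerTerm_comm ρ (1 - Δ₁ * Δ₂ - _),
    gallagerTerm_add_sub hρ (by linarith) hsum, gallagerTerm_add_sub hρ (by linarith) hdiff, hfun]
  ring

section Channel

variable {Y : Type*} {W : Bool → Y → ℝ} {y : Y}

lemma qW_nonneg (hW : ∀ x, 0 ≤ W x y) : 0 ≤ qW W y := by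
  unfold qW; linarith [hW false, hW true]

lemma abs_ΔW_le_one (hW : ∀ x, 0 ≤ W x y) : |ΔW W y| ≤ 1 := by
  have h₀ := hW false
  have h₁ := hW true
  rw [ΔW, abs_div, abs_of_nonneg (add_nonneg h₀ h₁)]
  exact div_le_one_of_le₀ (abs_sub_le_iff.mpr ⟨by linarith, by linarith⟩) (by linarith)

lemma eq_qW_mul_one_add_ΔW (h : W false y + W true y ≠ 0) :
    W false y = qW W y * (1 + ΔW W y) := by
  unfold qW ΔW; field_simp; ring

lemma eq_qW_mul_one_sub_ΔW (h : W false y + W true y ≠ 0) :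
    W true y = qW W y * (1 - ΔW W y) := by
  unfold qW ΔW; field_simp; ring

lemma exp_neg_E0 [Fintype Y] (ρ : ℝ) (hW : ∀ x y, 0 ≤ W x y) (y₀ : Y) (hy₀ : 0 < W false y₀) :
    exp (-E0 ρ W) = ∑ y, gallagerTerm ρ (W false y) (W true y) := by
  have hpos : 0 < ∑ y, gallagerTerm ρ (W false y) (W true y) :=
    Finset.sum_pos' (fun y _ => gallagerTerm_nonneg (hW _ y) (hW _ y))
      ⟨y₀, Finset.mem_univ _, gallagerTerm_pos_of_pos_left hy₀ (hW _ _)⟩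
  rw [E0, neg_neg]
  exact exp_log hpos

end Channel

lemma sum_gallagerTerm_Wplus {Y₁ Y₂ : Type*} {W₁ : Bool → Y₁ → ℝ} {W₂ : Bool → Y₂ → ℝ}
    {ρ : ℝ} (hρ : 1 + ρ ≠ 0) {y₁ : Y₁} {y₂ : Y₂}
    (hW₁ : ∀ x, 0 ≤ W₁ x y₁) (hW₁_ne : W₁ false y₁ + W₁ true y₁ ≠ 0)
    (hW₂ : ∀ x, 0 ≤ W₂ x y₂) (hW₂_ne : W₂ false y₂ + W₂ true y₂ ≠ 0)
    (hΔ : |ΔW W₁ y₁ * ΔW W₂ y₂| < 1) :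
    ∑ u, gallagerTerm ρ (Wplus W₁ W₂ false (y₁, y₂, u)) (Wplus W₁ W₂ true (y₁, y₂, u))
      = qW W₁ y₁ * qW W₂ y₂ * hfun ρ (ΔW W₁ y₁) (ΔW W₂ y₂) := by
  rw [Fintype.sum_bool, add_comm]
  simp only [Wplus, Bool.xor_false, Bool.xor_true, Bool.not_true, Bool.not_false]
  rw [eq_qW_mul_one_add_ΔW hW₁_ne, eq_qW_mul_one_sub_ΔW hW₁_ne, eq_qW_mul_one_add_ΔW hW₂_ne,
    eq_qW_mul_one_sub_ΔW hW₂_ne]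
  exact gallagerTerm_plus_pair hρ (qW_nonneg hW₁) (qW_nonneg hW₂) (abs_ΔW_le_one hW₁)
    (abs_ΔW_le_one hW₂) hΔ

theorem E0_plus_repr {Y1 Y2 : Type*} [Fintype Y1] [Fintype Y2]
    (W1 : Bool → Y1 → ℝ) (W2 : Bool → Y2 → ℝ)
    (hW1_nonneg : ∀ x y, 0 ≤ W1 x y) (hW1_sum : ∀ x, ∑ y, W1 x y = 1)
    (hW1_pos : ∀ y, 0 < W1 false y + W1 true y)
    (hW2_nonneg : ∀ x y, 0 ≤ W2 x y) (hW2_sum : ∀ x, ∑ y, W2 x y = 1)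
    (hW2_pos : ∀ y, 0 < W2 false y + W2 true y)
    (hΔ : ∀ y1 y2, |ΔW W1 y1 * ΔW W2 y2| < 1)
    (ρ : ℝ) (hρ : 0 ≤ ρ) :
    Real.exp (-(E0 ρ (Wplus W1 W2))) =
      ∑ y1, ∑ y2, qW W1 y1 * qW W2 y2 * hfun ρ |ΔW W1 y1| |ΔW W2 y2| := by
  obtain ⟨y1, -, hy1⟩ := Finset.exists_lt_of_sum_lt (s := Finset.univ) (f := fun _ => (0 : ℝ))
    (g := W1 false) (by simp [hW1_sum])
  obtain ⟨y2, -, hy2⟩ := Finset.exists_lt_of_sum_lt (s := Finset.univ) (f := fun _ => (0 : ℝ))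
    (g := W2 false) (by simp [hW2_sum])
  have hplus_nonneg : ∀ x y, 0 ≤ Wplus W1 W2 x y := fun x y => by
    have := hW1_nonneg (xor y.2.2 x) y.1
    have := hW2_nonneg x y.2.1
    unfold Wplus; positivity
  have hplus_pos : 0 < Wplus W1 W2 false (y1, y2, false) := by
    simp only [Wplus, Bool.xor_false]; positivity
  rw [exp_neg_E0 ρ hplus_nonneg _ hplus_pos, Fintype.sum_prod_type]
  refine Finset.sum_congr rfl fun y1 _ => ?_
  rw [Fintype.sum_prod_type]
  refine Finset.sum_congr rfl fun y2 _ => ?_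
  rw [hfun_abs_abs]
  exact sum_gallagerTerm_Wplus (by linarith) (hW1_nonneg · y1) (hW1_pos y1).ne'
    (hW2_nonneg · y2) (hW2_pos y2).ne' (hΔ y1 y2)
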